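/- Suppose a system satisfies, for each M > 0, an estimate |x(t,ξ,u)| ≤ β_M(|ξ|,t) + γ_M(‖u‖_∞) for all ξ and all inputs with ‖u‖_∞ ≤ M, where β_M ∈ KL, γ_M ∈ K∞. Let σ ∈ K satisfy γ_M(r) ≤ σ(M)σ(r) for all r ≥ 0 and integers M ≥ 1, and define γ(r) := σ(r+1)σ(r). Then γ ∈ K∞ and every trajectory satisfies the asymptotic gain property liminf_{t→∞} |x(t,ξ,u)| ≤ γ(‖u‖_∞). -/

import Mathlib

/-- A function of class `K`: continuous, strictly increasing on `[0,∞)`, zero at zero. -/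
def ClassK (f : ℝ → ℝ) : Prop :=
  ContinuousOn f (Set.Ici 0) ∧ StrictMonoOn f (Set.Ici 0) ∧ f 0 = 0

/-- A function of class `K∞`: class `K` and unbounded. -/
def ClassKInf (f : ℝ → ℝ) : Prop :=
  ClassK f ∧ Filter.Tendsto f Filter.atTop Filter.atTop

/-- A function of class `KL`. -/
def ClassKL (β : ℝ → ℝ → ℝ) : Prop :=
  (∀ t, 0 ≤ t → ClassK (fun r => β r t)) ∧
  (∀ r, 0 ≤ r → AntitoneOn (fun t => β r t) (Set.Ici 0) ∧
    Filter.Tendsto (fun t => β r t) Filter.atTop (nhds 0))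

/-!
The gain bound comes from the semiglobal estimate at the integer level `M = ⌊C⌋₊ + 1`, which
satisfies `C ≤ M ≤ C + 1`: the transient term `β_M(|ξ|, t)` vanishes as `t → ∞`, so the liminf is
at most `γ_M(C) ≤ σ(M) σ(C) ≤ σ(C + 1) σ(C)`. The gain is of class `K∞` because `σ` is unbounded,
being bounded below by the unbounded `γ_1 / σ(1)`.
-/

open Filter Set Topology

namespace ClassK

variable {f : ℝ → ℝ}

lemma nonneg (hf : ClassK f) {r : ℝ} (hr : 0 ≤ r) : 0 ≤ f r :=
  hf.2.2 ▸ hf.2.1.monotoneOn self_mem_Ici hr hr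

lemma pos (hf : ClassK f) {r : ℝ} (hr : 0 < r) : 0 < f r :=
  hf.2.2 ▸ hf.2.1 self_mem_Ici (mem_Ici.mpr hr.le) hr

lemma mul {g : ℝ → ℝ} (hf : ClassK f) (hgc : ContinuousOn g (Ici 0))
    (hgm : MonotoneOn g (Ici 0)) (hgpos : ∀ r, 0 ≤ r → 0 < g r) :
    ClassK (fun r => g r * f r) := by
  refine ⟨hgc.mul hf.1, fun a ha b hb hab => ?_, by simp [hf.2.2]⟩
  exact mul_lt_mul' (hgm ha hb hab.le) (hf.2.1 ha hb hab) (hf.nonneg ha) (hgpos b hb)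

lemma classKInf_mul_comp_add_one (hf : ClassK f) (hf_top : Tendsto f atTop atTop) :
    ClassKInf (fun r => f (r + 1) * f r) := by
  have hshift : MapsTo (· + 1) (Ici (0 : ℝ)) (Ici 0) := fun r (hr : 0 ≤ r) =>
    show (0 : ℝ) ≤ r + 1 by linarith
  refine ⟨hf.mul (hf.1.comp (continuousOn_id.add continuousOn_const) hshift)
    (hf.2.1.monotoneOn.comp ((monotone_id.add_const 1).monotoneOn _) hshift)
    (fun r hr => hf.pos (by linarith)), ?_⟩
  exact (hf_top.comp (tendsto_atTop_add_const_right _ 1 tendsto_id)).atTop_mul_atTop₀ hf_top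

end ClassK

lemma tendsto_atTop_of_le_const_mul {f γ : ℝ → ℝ} {c : ℝ} (hc : 0 < c)
    (hγ : Tendsto γ atTop atTop) (hle : ∀ r, 0 ≤ r → γ r ≤ c * f r) :
    Tendsto f atTop atTop :=
  (tendsto_const_mul_atTop_of_pos hc).mp <|
    tendsto_atTop_mono' _ (eventually_ge_atTop 0 |>.mono hle) hγ

lemma Filter.liminf_le_of_eventually_le_of_tendsto {α : Type*} {l : Filter α} [l.NeBot]
    {u v : α → ℝ} {c : ℝ} (hu : IsBoundedUnder (· ≥ ·) l u) (huv : u ≤ᶠ[l] v)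
    (hv : Tendsto v l (𝓝 c)) : liminf u l ≤ c :=
  hv.liminf_eq ▸ liminf_le_liminf huv hu hv.isBoundedUnder_le.isCoboundedUnder_ge

lemma exists_nat_one_le_mem_Icc_add_one {C : ℝ} (hC : 0 ≤ C) :
    ∃ M : ℕ, 1 ≤ M ∧ (M : ℝ) ∈ Icc C (C + 1) :=
  ⟨⌊C⌋₊ + 1, Nat.le_add_left 1 _, by exact_mod_cast (Nat.lt_floor_add_one C).le,
    by push_cast; linarith [Nat.floor_le hC]⟩

/-- If a system is semiglobally ISS with respect to inputs, with families β_M ∈ KL and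
γ_M ∈ K∞, and σ ∈ K satisfies γ_M(r) ≤ σ(M)σ(r) for integers M ≥ 1, then
γ(r) := σ(r+1)σ(r) is of class K∞ and every trajectory satisfies the asymptotic gain
property liminf_{t→∞} |x(t,ξ,u)| ≤ γ(‖u‖_∞). -/
theorem stmt19 {E F : Type*} [NormedAddCommGroup E] [NormedAddCommGroup F]
    (X : E → (ℝ → F) → ℝ → E)
    (βf : ℝ → ℝ → ℝ → ℝ) (γf : ℝ → ℝ → ℝ) (σ : ℝ → ℝ)
    (hfam : ∀ M : ℝ, 0 < M → ClassKL (βf M) ∧ ClassKInf (γf M))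
    (hest : ∀ M : ℝ, 0 < M → ∀ (ξ : E) (u : ℝ → F) (C : ℝ), 0 ≤ C → C ≤ M →
      (∀ s, 0 ≤ s → ‖u s‖ ≤ C) → ∀ t, 0 ≤ t → ‖X ξ u t‖ ≤ βf M ‖ξ‖ t + γf M C)
    (hσ : ClassK σ)
    (hσγ : ∀ M : ℕ, 1 ≤ M → ∀ r : ℝ, 0 ≤ r → γf (M : ℝ) r ≤ σ (M : ℝ) * σ r) :
    ClassKInf (fun r => σ (r + 1) * σ r) ∧
    ∀ (ξ : E) (u : ℝ → F) (C : ℝ), 0 ≤ C → (∀ s, 0 ≤ s → ‖u s‖ ≤ C) →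
      Filter.liminf (fun t => ‖X ξ u t‖) Filter.atTop ≤ σ (C + 1) * σ C := by
  have hσ_top : Tendsto σ atTop atTop := by
    refine tendsto_atTop_of_le_const_mul (hσ.pos one_pos) (hfam 1 one_pos).2.2 fun r hr => ?_
    simpa using hσγ 1 le_rfl r hr
  refine ⟨hσ.classKInf_mul_comp_add_one hσ_top, fun ξ u C hC hu => ?_⟩
  obtain ⟨M, hM1, hCM, hMC⟩ := exists_nat_one_le_mem_Icc_add_one hC
  have hMpos : (0 : ℝ) < M := by exact_mod_cast hM1
  have hβ : Tendsto (fun t => βf M ‖ξ‖ t + γf M C) atTop (𝓝 (γf M C)) := by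
    simpa using ((hfam M hMpos).1.2 ‖ξ‖ (norm_nonneg ξ)).2.add_const (γf M C)
  calc liminf (fun t => ‖X ξ u t‖) atTop
      ≤ γf M C :=
        liminf_le_of_eventually_le_of_tendsto (isBoundedUnder_of ⟨0, fun t => norm_nonneg _⟩)
          (eventually_ge_atTop 0 |>.mono (hest M hMpos ξ u C hC hCM hu)) hβ
    _ ≤ σ M * σ C := hσγ M hM1 C hC
    _ ≤ σ (C + 1) * σ C :=
        mul_le_mul_of_nonneg_right
          (hσ.2.1.monotoneOn hMpos.le (mem_Ici.mpr (by linarith)) hMC) (hσ.nonneg hC)
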